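/- Let f : {0,1}^n → {0,1} be computable by a decision tree of depth at most d. Define the decision tree T_f recursively: if f is a constant, T_f is a leaf labeled with that constant; otherwise, let M = x_{i_1}⋯x_{i_{d'}} (with i_1 < ⋯ < i_{d'}) be the first (in a fixed order, say lexicographic) maximal monomial of the multilinear polynomial representation of f, let the first d' levels of T_f be a complete binary tree in which every node at level j is labeled x_{i_j}, and at the node reached by the bit sequence (ξ_1,…,ξ_{d'}) attach recursively the tree T_g for g = f_{|x_{i_1}←ξ_1,…,x_{i_{d'}}←ξ_{d'}}. Then T_f computes f and has depth at most d². -/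

import Mathlib

/-- Binary decision trees over `n` Boolean variables. -/
inductive DTree (n : ℕ) : Type where
  | leaf : Bool → DTree n
  | node : Fin n → DTree n → DTree n → DTree n

namespace DTree

/-- Evaluation of a decision tree on an input `x`: at a node labeled `i`,
go right if `x i = true` and left otherwise. -/
def eval {n : ℕ} : DTree n → (Fin n → Bool) → Bool
  | leaf b, _ => b
  | node i t0 t1, x => if x i then eval t1 x else eval t0 x

/-- Depth of a decision tree: maximum number of edges on a root-to-leaf path. -/
def depth {n : ℕ} : DTree n → ℕ
  | leaf _ => 0
  | node _ t0 t1 => 1 + max (depth t0) (depth t1)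

end DTree

/-- Evaluation of a multilinear monomial (a set of variables) at a point. -/
def evalMono {n : ℕ} (M : Finset (Fin n)) (x : Fin n → Bool) : Bool :=
  decide (∀ i ∈ M, x i = true)

/-- Evaluation at `x` of the multilinear polynomial over `F₂` whose set of
monomials is `S` (sum modulo 2 of the monomials of `S`). -/
def polyEval {n : ℕ} (S : Finset (Finset (Fin n))) (x : Fin n → Bool) : Bool :=
  decide ((S.filter (fun M => evalMono M x = true)).card % 2 = 1)

/-- `S` is the (unique) multilinear `F₂`-polynomial representation of `f`:
the polynomial with monomial set `S` computes `f` everywhere. -/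
def Represents {n : ℕ} (S : Finset (Finset (Fin n))) (f : (Fin n → Bool) → Bool) : Prop :=
  ∀ x, polyEval S x = f x

/-- The restriction of `f` obtained by substituting, for each `i ∈ A`, the
value `ξ i` for the variable `x_i`. -/
def restrictSet {n : ℕ} (f : (Fin n → Bool) → Bool) (A : Finset (Fin n))
    (ξ : Fin n → Bool) : (Fin n → Bool) → Bool :=
  fun x => f (fun i => if i ∈ A then ξ i else x i)

/-- The complete tree querying the variables of the list `l` in order, and
attaching at the end of the branch described by the bits `bs` the tree `k bs`. -/
def prefixTree {n : ℕ} : List (Fin n) → (List Bool → DTree n) → DTree n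
  | [], k => k []
  | i :: l, k =>
      DTree.node i (prefixTree l fun bs => k (false :: bs))
        (prefixTree l fun bs => k (true :: bs))

/-- `MMTree f T` holds when `T` is obtained from `f` by the recursive
construction: if `f` is constant, `T` is a leaf labeled with that constant;
otherwise a maximal monomial `M` of the polynomial representation of `f` is
chosen, the first `|M|` levels of `T` form a complete tree querying the
(sorted) variables of `M`, and at the node reached by the bits `ξ` the
construction is applied recursively to the corresponding restriction of `f`. -/
inductive MMTree {n : ℕ} : ((Fin n → Bool) → Bool) → DTree n → Prop where
  | leaf (f : (Fin n → Bool) → Bool) (b : Bool) (hconst : ∀ x, f x = b) :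
      MMTree f (DTree.leaf b)
  | node (f : (Fin n → Bool) → Bool)
      (hnc : ¬ ∃ b : Bool, ∀ x, f x = b)
      (S : Finset (Finset (Fin n))) (hS : Represents S f)
      (M : Finset (Fin n)) (hM : M ∈ S)
      (hmax : ∀ M' ∈ S, M' ≠ M → ¬ M ⊆ M')
      (k : List Bool → DTree n)
      (hk : ∀ ξ : Fin n → Bool,
        MMTree (restrictSet f M ξ) (k ((M.sort (· ≤ ·)).map ξ))) :
      MMTree f (prefixTree (M.sort (· ≤ ·)) k)

/-!
Over `ZMod 2`, the iterated discrete derivative `∂_M f (z) = ∑_{A ⊆ M} f (z with x_M := 𝟙_A)` equals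
`∑_{N ⊇ M} (N \ M)(z)` over the monomials `N` of `f`, so it is identically `1` when `M` is a maximal
monomial. It vanishes for functions computed by trees of depth `< |M|` (a query outside `M` does
not move the sum, a query inside `M` splits it into two derivatives along `M \ {i}`), whence
`|M| ≤ d`. A path of a tree for `f` that never queries `M` would likewise force `∂_M f = 0`, so
fixing the variables of `M` leaves a tree of depth `≤ d - 1`. The construction thus uses at most
`d` levels before recursing on restrictions of depth `≤ d - 1`: depth `≤ d + (d - 1)² ≤ d²`.
Existence of the representation is Möbius inversion, `f x = ∑_{N ⊆ supp x} ∂_N f (0)`.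
-/

open Finset

section

variable {n : ℕ}

lemma natCast_card_Icc_finset_zmod2 {α : Type*} [DecidableEq α] {s t : Finset α} (h : s ⊆ t) :
    (#(Icc s t) : ZMod 2) = if s = t then 1 else 0 := by
  rw [card_Icc_finset h]
  split_ifs with hst
  · simp [hst]
  · have : 0 < #t - #s := Nat.sub_pos_of_lt (card_lt_card (ssubset_of_subset_of_ne h hst))
    rw [Nat.cast_pow, Nat.cast_ofNat, show (2 : ZMod 2) = 0 from rfl, zero_pow this.ne']

def toZMod2 (b : Bool) : ZMod 2 := if b then 1 else 0

@[simp] lemma toZMod2_true : toZMod2 true = 1 := rfl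
@[simp] lemma toZMod2_false : toZMod2 false = 0 := rfl

lemma toZMod2_injective : Function.Injective toZMod2 := by
  decide

lemma toZMod2_decide (p : Prop) [Decidable p] : toZMod2 (decide p) = if p then 1 else 0 := by
  by_cases p <;> simp [*]

lemma toZMod2_and (a b : Bool) : toZMod2 (a && b) = toZMod2 a * toZMod2 b := by
  cases a <;> cases b <;> simp

lemma toZMod2_polyEval (S : Finset (Finset (Fin n))) (x : Fin n → Bool) :
    toZMod2 (polyEval S x) = ∑ N ∈ S, toZMod2 (evalMono N x) := by
  have hsum : ∑ N ∈ S, toZMod2 (evalMono N x) = (#{N ∈ S | evalMono N x = true} : ZMod 2) := by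
    rw [natCast_card_filter]
    exact sum_congr rfl fun N _ => by cases evalMono N x <;> rfl
  rw [hsum, polyEval, ← ZMod.natCast_mod _ 2]
  rcases Nat.mod_two_eq_zero_or_one #{N ∈ S | evalMono N x = true} with h | h <;> simp [h]

lemma represents_iff_toZMod2 {S : Finset (Finset (Fin n))} {f : (Fin n → Bool) → Bool} :
    Represents S f ↔ ∀ x, toZMod2 (f x) = ∑ N ∈ S, toZMod2 (evalMono N x) := by
  simp only [Represents, ← toZMod2_polyEval, toZMod2_injective.eq_iff, eq_comm]

def patch (A : Finset (Fin n)) (ξ x : Fin n → Bool) : Fin n → Bool :=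
  fun i => if i ∈ A then ξ i else x i

lemma patch_eq_self {A : Finset (Fin n)} {ξ x : Fin n → Bool} (h : ∀ i ∈ A, ξ i = x i) :
    patch A ξ x = x :=
  funext fun i => by by_cases hi : i ∈ A <;> simp [patch, hi, h]

lemma restrictSet_congr (f : (Fin n → Bool) → Bool) {A : Finset (Fin n)} {ξ ξ' : Fin n → Bool}
    (h : ∀ i ∈ A, ξ i = ξ' i) : restrictSet f A ξ = restrictSet f A ξ' :=
  funext fun x => congrArg f (funext fun i => by by_cases hi : i ∈ A <;> simp [hi, h])

/-- `∂_M f (z)`, the sum of `f` over the points that agree with `z` off `M`. -/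
def iterDeriv (f : (Fin n → Bool) → Bool) (M : Finset (Fin n)) (z : Fin n → Bool) : ZMod 2 :=
  ∑ A ∈ M.powerset, toZMod2 (f (patch M (· ∈ A) z))

lemma iterDeriv_empty (f : (Fin n → Bool) → Bool) (z : Fin n → Bool) :
    iterDeriv f ∅ z = toZMod2 (f z) := by
  rw [iterDeriv, powerset_empty, sum_singleton]
  rfl

lemma iterDeriv_const {M : Finset (Fin n)} (hM : M.Nonempty) (b : Bool) (z : Fin n → Bool) :
    iterDeriv (fun _ => b) M z = 0 := by
  rw [iterDeriv, sum_const, card_powerset, nsmul_eq_mul, Nat.cast_pow, Nat.cast_ofNat,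
    show (2 : ZMod 2) = 0 from rfl, zero_pow hM.card_pos.ne', zero_mul]

lemma iterDeriv_congr {f g : (Fin n → Bool) → Bool} {M : Finset (Fin n)} {z : Fin n → Bool}
    (h : ∀ y, (∀ i ∉ M, y i = z i) → f y = g y) : iterDeriv f M z = iterDeriv g M z :=
  sum_congr rfl fun _ _ => congrArg toZMod2 (h _ fun _ hi => if_neg hi)

lemma iterDeriv_insert (f : (Fin n → Bool) → Bool) {M : Finset (Fin n)} {i : Fin n} (hi : i ∉ M)
    (z : Fin n → Bool) :
    iterDeriv f (insert i M) z =
      iterDeriv f M (Function.update z i false) + iterDeriv f M (Function.update z i true) := by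
  rw [iterDeriv, sum_powerset_insert hi]
  congr 1 <;> refine sum_congr rfl fun A hA => ?_ <;> congr 2 <;> funext j <;>
    rcases eq_or_ne j i with rfl | hj
  · have hiA : j ∉ A := fun h => hi (mem_powerset.mp hA h)
    simp [patch, hiA]
  · simp [patch, hj]
  · simp [patch, hi]
  · simp [patch, hj]

lemma iterDeriv_restrictSet (f : (Fin n → Bool) → Bool) {A M : Finset (Fin n)}
    (hAM : Disjoint A M) (ξ z : Fin n → Bool) :
    iterDeriv (restrictSet f A ξ) M z = iterDeriv f M (patch A ξ z) := by
  refine sum_congr rfl fun B _ => congrArg (fun y => toZMod2 (f y)) (funext fun j => ?_)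
  by_cases hj : j ∈ A
  · simp [patch, hj, disjoint_left.mp hAM hj]
  · simp [patch, hj]

lemma evalMono_patch (N M A : Finset (Fin n)) (z : Fin n → Bool) :
    evalMono N (patch M (· ∈ A) z) = (decide (N ∩ M ⊆ A) && evalMono (N \ M) z) := by
  simp only [evalMono, patch, ← Bool.decide_and, decide_eq_decide]
  constructor
  · intro h
    refine ⟨fun i hi => ?_, fun i hi => ?_⟩
    · simpa [(mem_inter.mp hi).2] using h i (mem_inter.mp hi).1
    · simpa [(mem_sdiff.mp hi).2] using h i (mem_sdiff.mp hi).1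
  · rintro ⟨hNM, hz⟩ i hi
    by_cases hiM : i ∈ M
    · simpa [hiM] using hNM (mem_inter.mpr ⟨hi, hiM⟩)
    · simpa [hiM] using hz i (mem_sdiff.mpr ⟨hi, hiM⟩)

lemma iterDeriv_polyEval (S : Finset (Finset (Fin n))) (M : Finset (Fin n)) (z : Fin n → Bool) :
    iterDeriv (polyEval S) M z = ∑ N ∈ S, if M ⊆ N then toZMod2 (evalMono (N \ M) z) else 0 := by
  simp only [iterDeriv, toZMod2_polyEval]
  rw [sum_comm]
  refine sum_congr rfl fun N _ => ?_
  have hcount : ∑ A ∈ M.powerset, toZMod2 (decide (N ∩ M ⊆ A)) = if M ⊆ N then 1 else 0 := by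
    have hIcc : {A ∈ M.powerset | N ∩ M ⊆ A} = Icc (N ∩ M) M := by
      ext A
      simp [and_comm]
    simp only [toZMod2_decide, sum_boole, hIcc, natCast_card_Icc_finset_zmod2 inter_subset_right,
      inter_eq_right]
  rw [sum_congr rfl fun _ _ => by rw [evalMono_patch, toZMod2_and], ← sum_mul, hcount]
  split_ifs <;> simp

lemma iterDeriv_eq_one_of_maximal {S : Finset (Finset (Fin n))} {f : (Fin n → Bool) → Bool}
    {M : Finset (Fin n)} (hS : Represents S f) (hM : M ∈ S)
    (hmax : ∀ M' ∈ S, M' ≠ M → ¬ M ⊆ M') (z : Fin n → Bool) : iterDeriv f M z = 1 := by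
  rw [show f = polyEval S from funext fun x => (hS x).symm, iterDeriv_polyEval,
    sum_eq_single_of_mem M hM fun N hN hne => if_neg (hmax N hN hne)]
  simp [evalMono]

lemma nonempty_of_iterDeriv_eq_one {f : (Fin n → Bool) → Bool} {M : Finset (Fin n)}
    (hf : ¬ ∃ b, ∀ x, f x = b) (h : ∀ z, iterDeriv f M z = 1) : M.Nonempty := by
  rcases M.eq_empty_or_nonempty with rfl | hM
  · refine absurd ⟨true, fun x => toZMod2_injective ?_⟩ hf
    rw [← iterDeriv_empty, h, toZMod2_true]
  · exact hM

lemma toZMod2_eq_sum_iterDeriv (f : (Fin n → Bool) → Bool) (x : Fin n → Bool) :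
    toZMod2 (f x) = ∑ N ∈ ({i | x i} : Finset (Fin n)).powerset, iterDeriv f N fun _ => false := by
  set B : Finset (Fin n) := {i | x i}
  have hpatch : ∀ N A : Finset (Fin n), A ⊆ N →
      patch N (· ∈ A) (fun _ => false) = fun i => decide (i ∈ A) := by
    intro N A hAN
    funext i
    by_cases hi : i ∈ N
    · simp [patch, hi]
    · simpa [patch, hi] using fun h => hi (hAN h)
  have hx : (fun i => decide (i ∈ B)) = x := by
    funext i
    simp [B]
  calc toZMod2 (f x)
      = ∑ A ∈ B.powerset, (#(Icc A B) : ZMod 2) * toZMod2 (f fun i => decide (i ∈ A)) := by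
        rw [sum_congr rfl fun A hA => by rw [natCast_card_Icc_finset_zmod2 (mem_powerset.mp hA)]]
        simp [hx]
    _ = ∑ A ∈ B.powerset, ∑ N ∈ Icc A B, toZMod2 (f fun i => decide (i ∈ A)) := by
        simp only [sum_const, nsmul_eq_mul]
    _ = ∑ N ∈ B.powerset, ∑ A ∈ N.powerset, toZMod2 (f fun i => decide (i ∈ A)) := by
        refine sum_comm' fun A N => ?_
        simp only [mem_powerset, mem_Icc]
        exact ⟨fun ⟨_, hAN, hNB⟩ => ⟨hAN, hNB⟩, fun ⟨hAN, hNB⟩ => ⟨hAN.trans hNB, hAN, hNB⟩⟩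
    _ = ∑ N ∈ B.powerset, iterDeriv f N fun _ => false := by
        refine sum_congr rfl fun N _ => sum_congr rfl fun A hA => ?_
        rw [hpatch N A (mem_powerset.mp hA)]

theorem exists_represents (f : (Fin n → Bool) → Bool) : ∃ S, Represents S f := by
  refine ⟨({N | iterDeriv f N (fun _ => false) = 1} : Finset _),
    represents_iff_toZMod2.mpr fun x => ?_⟩
  rw [toZMod2_eq_sum_iterDeriv, sum_filter, ← filter_subset_univ, sum_filter]
  refine sum_congr rfl fun N _ => ?_
  have hN : evalMono N x = decide (N ⊆ ({i | x i} : Finset (Fin n))) := by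
    simp [evalMono, subset_iff]
  have hcoef : ∀ c a : ZMod 2, (if c = 1 then a else 0) = c * a := by decide
  rw [hcoef, hN, toZMod2_decide, mul_ite, mul_one, mul_zero]

lemma exists_maximal_of_represents {S : Finset (Finset (Fin n))} {f : (Fin n → Bool) → Bool}
    (hS : Represents S f) (hf : ¬ ∃ b, ∀ x, f x = b) :
    ∃ M ∈ S, ∀ M' ∈ S, M' ≠ M → ¬ M ⊆ M' := by
  obtain ⟨M, hM⟩ := S.exists_maximal (nonempty_iff_ne_empty.mpr fun hS0 =>
    hf ⟨false, fun x => by rw [← hS x, hS0]; simp [polyEval]⟩)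
  exact ⟨M, hM.prop, fun M' hM' hne hsub => hne (hM.eq_of_ge hM' hsub)⟩

namespace DTree

def restrict (A : Finset (Fin n)) (ξ : Fin n → Bool) : DTree n → DTree n
  | leaf b => leaf b
  | node i t0 t1 =>
      if i ∈ A then (if ξ i then t1.restrict A ξ else t0.restrict A ξ)
      else node i (t0.restrict A ξ) (t1.restrict A ξ)

lemma eval_restrict (A : Finset (Fin n)) (ξ : Fin n → Bool) (t : DTree n) :
    (t.restrict A ξ).eval = restrictSet t.eval A ξ := by
  induction t with
  | leaf b => rfl
  | node i t0 t1 ih0 ih1 =>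
    funext x
    by_cases hi : i ∈ A
    · cases hξ : ξ i <;> simp [restrict, eval, restrictSet, hi, hξ, ih0, ih1]
    · cases hx : x i <;> simp [restrict, eval, restrictSet, hi, hx, ih0, ih1]

lemma depth_restrict_le (A : Finset (Fin n)) (ξ : Fin n → Bool) (t : DTree n) :
    (t.restrict A ξ).depth ≤ t.depth := by
  induction t with
  | leaf b => rfl
  | node i t0 t1 ih0 ih1 =>
    by_cases hi : i ∈ A
    · cases hξ : ξ i <;> simp [restrict, depth, hi, hξ] <;> omega
    · simp [restrict, depth, hi]
      omega

lemma depth_restrict_node_lt {A : Finset (Fin n)} {i : Fin n} (hi : i ∈ A) (ξ : Fin n → Bool)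
    (t0 t1 : DTree n) : ((node i t0 t1).restrict A ξ).depth < (node i t0 t1).depth := by
  have h0 := depth_restrict_le A ξ t0
  have h1 := depth_restrict_le A ξ t1
  cases hξ : ξ i <;> simp [restrict, depth, hi, hξ] <;> omega

end DTree

open DTree

lemma iterDeriv_node_of_notMem {M : Finset (Fin n)} {i : Fin n} (hi : i ∉ M) (t0 t1 : DTree n)
    (z : Fin n → Bool) :
    iterDeriv (node i t0 t1).eval M z = iterDeriv (if z i then t1 else t0).eval M z :=
  iterDeriv_congr fun y hy => by
    rw [eval, hy i hi]
    cases z i <;> rfl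

lemma iterDeriv_eval_eq_zero_of_depth_lt (t : DTree n) {M : Finset (Fin n)}
    (hM : t.depth < M.card) (z : Fin n → Bool) : iterDeriv t.eval M z = 0 := by
  induction t generalizing M z with
  | leaf b => exact iterDeriv_const (card_pos.mp (by omega)) b z
  | node i t0 t1 ih0 ih1 =>
    have hdepth : (node i t0 t1).depth = 1 + max t0.depth t1.depth := rfl
    by_cases hi : i ∈ M
    · have hcard : (M.erase i).card = M.card - 1 := card_erase_of_mem hi
      rw [← insert_erase hi, iterDeriv_insert _ (notMem_erase i M),
        iterDeriv_node_of_notMem (notMem_erase i M), iterDeriv_node_of_notMem (notMem_erase i M)]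
      simp only [Function.update_self, Bool.false_eq_true, if_false, if_true]
      rw [ih0 (by omega), ih1 (by omega), add_zero]
    · rw [iterDeriv_node_of_notMem hi]
      cases z i
      · exact ih0 (by omega) z
      · exact ih1 (by omega) z

lemma card_le_depth_of_iterDeriv_eq_one {t : DTree n} {M : Finset (Fin n)} {z : Fin n → Bool}
    (h : iterDeriv t.eval M z = 1) : M.card ≤ t.depth := by
  by_contra hlt
  rw [iterDeriv_eval_eq_zero_of_depth_lt t (not_le.mp hlt)] at h
  exact zero_ne_one h

theorem exists_eval_eq_restrictSet_depth_lt {M : Finset (Fin n)} (hM : M.Nonempty)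
    (ξ : Fin n → Bool) (t : DTree n) (h : ∀ z, iterDeriv t.eval M z = 1) :
    ∃ t' : DTree n, t'.eval = restrictSet t.eval M ξ ∧ t'.depth < t.depth := by
  match t with
  | leaf b =>
    have hξ := h ξ
    rw [show (leaf b).eval = fun _ => b from rfl, iterDeriv_const hM] at hξ
    exact absurd hξ zero_ne_one
  | node i t0 t1 =>
    by_cases hi : i ∈ M
    · exact ⟨_, eval_restrict M ξ _, depth_restrict_node_lt hi ξ t0 t1⟩
    -- Recursing on `t0`, `t1` directly would fail, as they may query `x i` again; fixing `x i`
    -- first keeps `∂_M ≡ 1` because `i ∉ M`.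
    have hfix : ∀ b : Bool, ∀ z, iterDeriv ((node i t0 t1).restrict {i} fun _ => b).eval M z = 1 :=
      fun b z => by
        rw [eval_restrict, iterDeriv_restrictSet _ (disjoint_singleton_left.mpr hi)]
        exact h _
    obtain ⟨U0, hU0, hU0d⟩ := exists_eval_eq_restrictSet_depth_lt hM ξ _ (hfix false)
    obtain ⟨U1, hU1, hU1d⟩ := exists_eval_eq_restrictSet_depth_lt hM ξ _ (hfix true)
    refine ⟨node i U0 U1, funext fun x => ?_, ?_⟩
    · have hrestr : ∀ U : DTree n,
          U.eval = restrictSet ((node i t0 t1).restrict {i} fun _ => x i).eval M ξ →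
          U.eval x = restrictSet (node i t0 t1).eval M ξ x := by
        intro U hU
        rw [hU, eval_restrict]
        exact congrArg (node i t0 t1).eval
          (patch_eq_self (A := {i}) (ξ := fun _ => x i) (x := patch M ξ x) (by simp [patch, hi]))
      cases hx : x i
      · simpa [eval, hx] using hrestr U0 (hx ▸ hU0)
      · simpa [eval, hx] using hrestr U1 (hx ▸ hU1)
    · have h0 := depth_restrict_node_lt (mem_singleton_self i) (fun _ => false) t0 t1
      have h1 := depth_restrict_node_lt (mem_singleton_self i) (fun _ => true) t0 t1
      simp only [depth] at h0 h1 ⊢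
      omega
termination_by t.depth
decreasing_by all_goals exact depth_restrict_node_lt (mem_singleton_self i) _ t0 t1

lemma eval_prefixTree (l : List (Fin n)) (k : List Bool → DTree n) (x : Fin n → Bool) :
    (prefixTree l k).eval x = (k (l.map x)).eval x := by
  induction l generalizing k with
  | nil => rfl
  | cons i l ih => cases hx : x i <;> simp [prefixTree, eval, hx, ih]

lemma depth_prefixTree_le {l : List (Fin n)} (hl : l.Nodup) {k : List Bool → DTree n} {c : ℕ}
    (h : ∀ ξ : Fin n → Bool, (k (l.map ξ)).depth ≤ c) : (prefixTree l k).depth ≤ l.length + c := by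
  induction l generalizing k with
  | nil => simpa [prefixTree] using h fun _ => false
  | cons i l ih =>
    have hbranch : ∀ b : Bool, (prefixTree l fun bs => k (b :: bs)).depth ≤ l.length + c :=
      fun b => ih hl.of_cons fun ξ => by
        have hξ : l.map (Function.update ξ i b) = l.map ξ := List.map_congr_left fun j hj =>
          Function.update_of_ne (by rintro rfl; exact (List.nodup_cons.mp hl).1 hj) _ _
        simpa [hξ] using h (Function.update ξ i b)
    have h0 := hbranch false
    have h1 := hbranch true
    simp only [prefixTree, depth, List.length_cons]
    omega

lemma MMTree.eval_eq {f : (Fin n → Bool) → Bool} {T : DTree n} (h : MMTree f T) : T.eval = f := by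
  induction h with
  | leaf f b hb => exact funext fun x => (hb x).symm
  | node f _ S _ M _ _ k _ ih =>
    funext x
    rw [eval_prefixTree, ih x]
    exact congrArg f (patch_eq_self fun _ _ => rfl)

lemma MMTree.depth_le_sq {f : (Fin n → Bool) → Bool} {T : DTree n} (h : MMTree f T) :
    ∀ t : DTree n, t.eval = f → T.depth ≤ t.depth ^ 2 := by
  induction h with
  | leaf => exact fun _ _ => Nat.zero_le _
  | node f hf S hS M hM hmax k _ ih =>
    intro t ht
    subst ht
    have hderiv := iterDeriv_eq_one_of_maximal hS hM hmax
    have hne := nonempty_of_iterDeriv_eq_one hf hderiv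
    have hcard : M.card ≤ t.depth := card_le_depth_of_iterDeriv_eq_one (hderiv fun _ => false)
    have hbranch : ∀ ξ, (k ((M.sort (· ≤ ·)).map ξ)).depth ≤ (t.depth - 1) ^ 2 := fun ξ => by
      obtain ⟨t', ht', hlt⟩ := exists_eval_eq_restrictSet_depth_lt hne ξ t hderiv
      exact (ih ξ t' ht').trans (Nat.pow_le_pow_left (by omega) 2)
    calc (prefixTree (M.sort (· ≤ ·)) k).depth ≤ M.card + (t.depth - 1) ^ 2 := by
          simpa using depth_prefixTree_le (sort_nodup M _) hbranch
      _ ≤ t.depth ^ 2 := by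
          obtain ⟨e, he⟩ : ∃ e, t.depth = e + 1 := ⟨t.depth - 1, by have := hne.card_pos; omega⟩
          rw [he, Nat.add_sub_cancel]
          nlinarith

theorem exists_MMTree (t : DTree n) : ∃ T, MMTree t.eval T := by
  by_cases hconst : ∃ b, ∀ x, t.eval x = b
  · obtain ⟨b, hb⟩ := hconst
    exact ⟨leaf b, .leaf _ b hb⟩
  obtain ⟨S, hS⟩ := exists_represents t.eval
  obtain ⟨M, hM, hmax⟩ := exists_maximal_of_represents hS hconst
  have hderiv := iterDeriv_eq_one_of_maximal hS hM hmax
  have hne := nonempty_of_iterDeriv_eq_one hconst hderiv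
  have hbranch : ∀ bs : List Bool, ∃ T : DTree n,
      ∀ ξ, (M.sort (· ≤ ·)).map ξ = bs → MMTree (restrictSet t.eval M ξ) T := by
    intro bs
    by_cases hbs : ∃ ξ₀, (M.sort (· ≤ ·)).map ξ₀ = bs
    · obtain ⟨ξ₀, rfl⟩ := hbs
      obtain ⟨t', ht', hlt⟩ := exists_eval_eq_restrictSet_depth_lt hne ξ₀ t hderiv
      obtain ⟨T, hT⟩ := exists_MMTree t'
      refine ⟨T, fun ξ hξ => ?_⟩
      rwa [restrictSet_congr _ fun j hj => List.map_inj_left.mp hξ j (mem_sort _ |>.mpr hj), ← ht']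
    · exact ⟨leaf false, fun ξ hξ => absurd ⟨ξ, hξ⟩ hbs⟩
  choose k hk using hbranch
  exact ⟨_, .node _ hconst S hS M hM hmax k fun ξ => hk _ ξ rfl⟩
termination_by t.depth

end

/-- For `f` computable by a decision tree of depth at most `d`, the recursively
built tree `T_f` exists, computes `f`, and has depth at most `d ^ 2`. -/
theorem stmt4 {n d : ℕ} (f : (Fin n → Bool) → Bool)
    (T : DTree n) (hT : ∀ x, T.eval x = f x) (hdepth : T.depth ≤ d) :
    (∃ Tf : DTree n, MMTree f Tf) ∧
    ∀ Tf : DTree n, MMTree f Tf → (∀ x, Tf.eval x = f x) ∧ Tf.depth ≤ d ^ 2 := by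
  obtain rfl : T.eval = f := funext hT
  exact ⟨exists_MMTree T, fun Tf h =>
    ⟨congrFun h.eval_eq, (h.depth_le_sq T rfl).trans (Nat.pow_le_pow_left hdepth 2)⟩⟩
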